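/- In U_q(sl2), the shifted extremal projector satisfies f·π(s) = π(s−1) · (q^{h+2}[s]_q/[s−2−h]_q) · f as an identity of operators on every highest weight module for which all coefficients are defined. -/

import Mathlib

/-!
Commuting `F` to the front of `π(s-1)` uses `E^(k+1) F = F E^(k+1) + [k+1][h+k] E^k` on vectors
of weight `h`, which turns the right-hand side into `∑ₖ c (b_k + b_{k+1} [k+1][h+k]) F^(k+1) E^k v`,
with `b_k` the coefficients of `π(s-1)` and `c = q^(h+2)[s]/[s-2-h]` evaluated on `F v`. That this
equals the coefficient `a_k` of `π(s)` reduces, after the ratios `a_k / b_k` and `b_(k+1) / b_k` are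
read off, to the q-number identity `[s-h] = q^k (q^h [s+k] - q^s [h+k])`.
-/

open Finset

noncomputable section

/-- `(u - u⁻¹)/(q - q⁻¹)`; with `u = q^z` this is the q-number `[z]_q`. -/
def qNum (q u : ℂ) : ℂ := (u - u⁻¹) / (q - q⁻¹)

/-- q-factorial `[k]_q!`. -/
def qFact (q : ℂ) (k : ℕ) : ℂ := ∏ i ∈ Finset.range k, qNum q (q ^ (i + 1))

theorem sub_inv_ne_zero {K : Type*} [Field K] {x : K} (hx : x ≠ 0) (h : x ^ 2 ≠ 1) :
    x - x⁻¹ ≠ 0 := by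
  intro h0
  apply h
  rw [sub_eq_zero] at h0
  rw [sq]
  nth_rewrite 2 [h0]
  exact mul_inv_cancel₀ hx

theorem qNum_pow_ne_zero {q : ℂ} (hq0 : q ≠ 0) (hq : ∀ n : ℕ, 0 < n → q ^ n ≠ 1) {n : ℕ}
    (hn : 0 < n) : qNum q (q ^ n) ≠ 0 := by
  refine div_ne_zero (sub_inv_ne_zero (pow_ne_zero n hq0) ?_)
    (sub_inv_ne_zero hq0 (hq 2 two_pos))
  rw [← pow_mul]
  exact hq _ (by positivity)

theorem qFact_succ (q : ℂ) (k : ℕ) : qFact q (k + 1) = qFact q k * qNum q (q ^ (k + 1)) :=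
  prod_range_succ _ _

theorem qNum_mul_inv {q u w g : ℂ} (hu : u ≠ 0) (hw : w ≠ 0) (hg : g ≠ 0) :
    qNum q (u * w⁻¹) = g * (w * qNum q (u * g) - u * qNum q (w * g)) := by
  simp only [qNum, div_eq_mul_inv]
  rw [show ∀ D : ℂ, g * (w * ((u * g - (u * g)⁻¹) * D) - u * ((w * g - (w * g)⁻¹) * D))
      = g * (w * (u * g - (u * g)⁻¹) - u * (w * g - (w * g)⁻¹)) * D from fun D => by ring]
  congr 1
  field_simp
  ring

theorem qNum_self_mul (q u : ℂ) : qNum q q * qNum q u = qNum q u := by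
  rcases eq_or_ne (q - q⁻¹) 0 with hqq | hqq
  · simp [qNum, hqq]
  · rw [qNum, div_self hqq, one_mul]

theorem qNum_pow_mul_qNum_add_qNum {q : ℂ} (hq0 : q ≠ 0) {κ : ℂ} (hκ : κ ≠ 0) (k : ℕ) :
    qNum q (q ^ (k + 1)) * qNum q (q ^ 2 * κ * q ^ k) + qNum q κ
      = qNum q (q ^ (k + 1 + 1)) * qNum q (κ * q ^ (k + 1)) := by
  rcases eq_or_ne (q - q⁻¹) 0 with hqq | hqq
  · simp [qNum, hqq]
  have hg : q ^ k ≠ 0 := pow_ne_zero k hq0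
  simp only [qNum, pow_succ]
  field_simp
  ring

/-- The `k`-th coefficient of `π(s)` on a vector of weight `q^h = κ`, where `t = q^s`. -/
def projCoeff (q t κ : ℂ) (k : ℕ) : ℂ :=
  (-1) ^ k * (t * (q * κ)⁻¹) ^ k / (qFact q k * ∏ i ∈ range k, qNum q (t * q ^ ((i : ℤ) + 1)))

theorem projCoeff_shift {q : ℂ} (hq0 : q ≠ 0) (t κ : ℂ) (k : ℕ) :
    projCoeff q (t * q⁻¹) (κ * (q ^ 2)⁻¹) k
      = (-1) ^ k * (t * κ⁻¹) ^ k / (qFact q k * ∏ i ∈ range k, qNum q (t * q ^ (i : ℤ))) := by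
  have hbase : t * q⁻¹ * (q * (κ * (q ^ 2)⁻¹))⁻¹ = t * κ⁻¹ := by field_simp
  have harg : ∀ i : ℕ, t * q⁻¹ * q ^ ((i : ℤ) + 1) = t * q ^ (i : ℤ) := fun i => by
    rw [zpow_add_one₀ hq0]; field_simp
  simp only [projCoeff, hbase, harg]

theorem prod_qNum_mul_qNum (q t : ℂ) (k : ℕ) :
    (∏ i ∈ range k, qNum q (t * q ^ (i : ℤ))) * qNum q (t * q ^ (k : ℤ))
      = qNum q t * ∏ i ∈ range k, qNum q (t * q ^ ((i : ℤ) + 1)) := by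
  rw [← prod_range_succ (fun i : ℕ => qNum q (t * q ^ (i : ℤ))), prod_range_succ']
  simp [mul_comm]

theorem projCoeff_mul_eq_projCoeff_shift_mul {q : ℂ} (hq0 : q ≠ 0) (t κ : ℂ) {k : ℕ}
    (ht : ∀ i ≤ k, qNum q (t * q ^ (i : ℤ)) ≠ 0) :
    projCoeff q t κ k * (q ^ k * qNum q (t * q ^ (k : ℤ)))
      = projCoeff q (t * q⁻¹) (κ * (q ^ 2)⁻¹) k * qNum q t := by
  have hP : ∏ i ∈ range k, qNum q (t * q ^ ((i : ℤ) + 1)) ≠ 0 := by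
    refine prod_ne_zero_iff.mpr fun i hi => ?_
    simpa using ht (i + 1) (mem_range.mp hi)
  have hQ : ∏ i ∈ range k, qNum q (t * q ^ (i : ℤ)) ≠ 0 :=
    prod_ne_zero_iff.mpr fun i hi => ht i (mem_range.mp hi).le
  have hratio : qNum q (t * q ^ (k : ℤ)) / ∏ i ∈ range k, qNum q (t * q ^ ((i : ℤ) + 1))
      = qNum q t / ∏ i ∈ range k, qNum q (t * q ^ (i : ℤ)) := by
    rw [div_eq_div_iff hP hQ, mul_comm, prod_qNum_mul_qNum]
  have hpow : (t * (q * κ)⁻¹) ^ k * q ^ k = (t * κ⁻¹) ^ k := by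
    rw [← mul_pow]; field_simp
  calc projCoeff q t κ k * (q ^ k * qNum q (t * q ^ (k : ℤ)))
      = (-1) ^ k * ((t * (q * κ)⁻¹) ^ k * q ^ k) / qFact q k
          * (qNum q (t * q ^ (k : ℤ)) / ∏ i ∈ range k, qNum q (t * q ^ ((i : ℤ) + 1))) := by
        rw [projCoeff]; ring
    _ = _ := by rw [hratio, hpow, projCoeff_shift hq0]; ring

theorem projCoeff_shift_succ_mul {q : ℂ} (hq0 : q ≠ 0) (t κ : ℂ) {k : ℕ}
    (hk : qNum q (q ^ (k + 1)) ≠ 0) (ht : qNum q (t * q ^ (k : ℤ)) ≠ 0) :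
    projCoeff q (t * q⁻¹) (κ * (q ^ 2)⁻¹) (k + 1)
        * (qNum q (q ^ (k + 1)) * qNum q (t * q ^ (k : ℤ)))
      = -(t * κ⁻¹) * projCoeff q (t * q⁻¹) (κ * (q ^ 2)⁻¹) k := by
  rw [projCoeff_shift hq0, projCoeff_shift hq0, qFact_succ, prod_range_succ, pow_succ, pow_succ]
  field_simp

theorem projCoeff_eq_shift_add {q : ℂ} (hq0 : q ≠ 0) {t κ : ℂ} (ht0 : t ≠ 0) (hκ : κ ≠ 0)
    {k : ℕ} (hk : qNum q (q ^ (k + 1)) ≠ 0) (ht : ∀ i ≤ k, qNum q (t * q ^ (i : ℤ)) ≠ 0)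
    (hd : qNum q (t * κ⁻¹) ≠ 0) :
    projCoeff q t κ k
      = κ * qNum q t / qNum q (t * κ⁻¹) * projCoeff q (t * q⁻¹) (κ * (q ^ 2)⁻¹) k
        + κ * qNum q t / qNum q (t * κ⁻¹) * projCoeff q (t * q⁻¹) (κ * (q ^ 2)⁻¹) (k + 1)
          * (qNum q (q ^ (k + 1)) * qNum q (κ * q ^ k)) := by
  have hr : qNum q (t * q ^ k) ≠ 0 := by simpa using ht k le_rfl
  have h1 := projCoeff_mul_eq_projCoeff_shift_mul hq0 t κ ht
  have h2 := projCoeff_shift_succ_mul hq0 t κ hk (ht k le_rfl)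
  have h3 := qNum_mul_inv (q := q) ht0 hκ (pow_ne_zero k hq0)
  rw [zpow_natCast] at h1 h2
  have hy : κ * (t * κ⁻¹) = t := by field_simp
  have hc : κ * qNum q t / qNum q (t * κ⁻¹) * qNum q (t * κ⁻¹) = κ * qNum q t :=
    div_mul_cancel₀ _ hd
  set c := κ * qNum q t / qNum q (t * κ⁻¹)
  set B := projCoeff q (t * q⁻¹) (κ * (q ^ 2)⁻¹)
  -- `h3` is `[s-h] = q^k (q^h [s+k] - q^s [h+k])`; what remains is clearing `[s-h]` and `[s+k]`.
  rw [← mul_left_inj' (mul_ne_zero hd hr)]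
  linear_combination (projCoeff q t κ k * qNum q (t * q ^ k)) * h3
    + (κ * qNum q (t * q ^ k) - t * qNum q (κ * q ^ k)) * h1
    - κ * qNum q t * qNum q (κ * q ^ k) * h2 + qNum q t * qNum q (κ * q ^ k) * B k * hy
    - (B k + B (k + 1) * (qNum q (q ^ (k + 1)) * qNum q (κ * q ^ k))) * qNum q (t * q ^ k) * hc

section WeightVector

variable {V : Type*} [AddCommGroup V] [Module ℂ V] {q κ : ℂ} {E F K Ki : Module.End ℂ V} {v : V}

theorem apply_eq_inv_smul_of_apply_eq_smul (hKi : Ki * K = 1) (hκ : κ ≠ 0)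
    (hKv : K v = κ • v) : Ki v = κ⁻¹ • v := by
  have h : Ki (K v) = v := by rw [← Module.End.mul_apply, hKi, Module.End.one_apply]
  rw [hKv, map_smul] at h
  calc Ki v = κ⁻¹ • κ • Ki v := by rw [smul_smul, inv_mul_cancel₀ hκ, one_smul]
    _ = κ⁻¹ • v := by rw [h]

theorem K_apply_E_apply (hKE : K * E = (q ^ 2) • (E * K)) (hKv : K v = κ • v) :
    K (E v) = (q ^ 2 * κ) • E v := by
  rw [← Module.End.mul_apply, hKE, LinearMap.smul_apply, Module.End.mul_apply, hKv, map_smul,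
    smul_smul]

theorem E_apply_F_apply (hKi : Ki * K = 1) (hEF : E * F - F * E = (q - q⁻¹)⁻¹ • (K - Ki))
    (hκ : κ ≠ 0) (hKv : K v = κ • v) : E (F v) = F (E v) + qNum q κ • v := by
  have h := congrArg (fun A : Module.End ℂ V => A v) hEF
  simp only [LinearMap.sub_apply, LinearMap.smul_apply, Module.End.mul_apply, hKv,
    apply_eq_inv_smul_of_apply_eq_smul hKi hκ hKv] at h
  rw [← sub_eq_iff_eq_add', h, qNum, ← sub_smul, smul_smul, div_eq_inv_mul]

theorem pow_succ_apply_F_apply (hq0 : q ≠ 0) (hKi : Ki * K = 1)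
    (hKE : K * E = (q ^ 2) • (E * K)) (hEF : E * F - F * E = (q - q⁻¹)⁻¹ • (K - Ki))
    (k : ℕ) : ∀ {κ : ℂ} {v : V}, κ ≠ 0 → K v = κ • v →
      (E ^ (k + 1)) (F v)
        = F ((E ^ (k + 1)) v) + (qNum q (q ^ (k + 1)) * qNum q (κ * q ^ k)) • (E ^ k) v := by
  have hE : ∀ n (w : V), (E ^ n) (E w) = (E ^ (n + 1)) w := fun n w => by
    rw [pow_succ, Module.End.mul_apply]
  induction k with
  | zero =>
    intro κ v hκ hKv
    simpa [qNum_self_mul] using E_apply_F_apply hKi hEF hκ hKv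
  | succ k ih =>
    intro κ v hκ hKv
    have hEv := ih (mul_ne_zero (pow_ne_zero 2 hq0) hκ) (K_apply_E_apply hKE hKv)
    rw [← hE, E_apply_F_apply hKi hEF hκ hKv, map_add, map_smul, hEv, hE, hE, add_assoc,
      ← add_smul, qNum_pow_mul_qNum_add_qNum hq0 hκ]

theorem sum_smul_pow_F_pow_E_F_apply (hq0 : q ≠ 0) (hKi : Ki * K = 1)
    (hKE : K * E = (q ^ 2) • (E * K)) (hEF : E * F - F * E = (q - q⁻¹)⁻¹ • (K - Ki))
    (hκ : κ ≠ 0) (hKv : K v = κ • v) {N : ℕ} (hnil : (E ^ (N + 1)) v = 0) (b : ℕ → ℂ) :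
    ∑ k ∈ range (N + 2), b k • (F ^ k) ((E ^ k) (F v))
      = ∑ k ∈ range (N + 1),
          (b k + b (k + 1) * (qNum q (q ^ (k + 1)) * qNum q (κ * q ^ k))) •
            (F ^ (k + 1)) ((E ^ k) v) := by
  have hterm : ∀ j, b (j + 1) • (F ^ (j + 1)) ((E ^ (j + 1)) (F v))
      = b (j + 1) • (F ^ (j + 1 + 1)) ((E ^ (j + 1)) v)
        + (b (j + 1) * (qNum q (q ^ (j + 1)) * qNum q (κ * q ^ j))) •
            (F ^ (j + 1)) ((E ^ j) v) := fun j => by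
    rw [pow_succ_apply_F_apply hq0 hKi hKE hEF j hκ hKv, map_add, map_smul, smul_add, smul_smul,
      pow_succ F (j + 1), Module.End.mul_apply]
  have htop : ∑ j ∈ range (N + 1), b (j + 1) • (F ^ (j + 1 + 1)) ((E ^ (j + 1)) v)
      = ∑ j ∈ range N, b (j + 1) • (F ^ (j + 1 + 1)) ((E ^ (j + 1)) v) := by
    rw [sum_range_succ, hnil, map_zero, smul_zero, add_zero]
  calc ∑ k ∈ range (N + 2), b k • (F ^ k) ((E ^ k) (F v))
      = ∑ j ∈ range (N + 1), b (j + 1) • (F ^ (j + 1)) ((E ^ (j + 1)) (F v))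
          + b 0 • (F ^ 0) ((E ^ 0) (F v)) := sum_range_succ' _ _
    _ = (∑ j ∈ range N, b (j + 1) • (F ^ (j + 1 + 1)) ((E ^ (j + 1)) v)
          + b 0 • (F ^ (0 + 1)) ((E ^ 0) v))
          + ∑ k ∈ range (N + 1), (b (k + 1) * (qNum q (q ^ (k + 1)) * qNum q (κ * q ^ k))) •
            (F ^ (k + 1)) ((E ^ k) v) := by
      simp only [hterm, sum_add_distrib, htop, pow_zero, zero_add, pow_one,
        Module.End.one_apply]
      abel
    _ = _ := by
      rw [← sum_range_succ' (fun k => b k • (F ^ (k + 1)) ((E ^ k) v)), ← sum_add_distrib]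
      simp only [add_smul]

end WeightVector

/-- `π(s)` truncated after `E^N`, which is all of it on `v` when `E^(N+1) v = 0`. -/
def projector {V : Type*} [AddCommGroup V] [Module ℂ V] (q t κ : ℂ) (E F : Module.End ℂ V)
    (N : ℕ) (v : V) : V :=
  ∑ k ∈ range (N + 1), projCoeff q t κ k • (F ^ k) ((E ^ k) v)

theorem f_intertwining_relation_general {V : Type*} [AddCommGroup V] [Module ℂ V]
    (q t κ : ℂ) (hq0 : q ≠ 0) (hq : ∀ n : ℕ, 0 < n → q ^ n ≠ 1) (ht : t ≠ 0) (hκ : κ ≠ 0)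
    (E F K Ki : Module.End ℂ V)
    (hKi : Ki * K = 1)
    (hKE : K * E = (q ^ 2) • (E * K))
    (hEF : E * F - F * E = (q - q⁻¹)⁻¹ • (K - Ki))
    (v : V) (hKv : K v = κ • v) (N : ℕ) (hnil : (E ^ (N + 1)) v = 0)
    (hden : ∀ i : ℕ, i ≤ N + 1 → qNum q (t * q ^ (i : ℤ)) ≠ 0)
    (hden' : qNum q (t * κ⁻¹) ≠ 0) :
    F (∑ k ∈ range (N + 1),
        ((-1 : ℂ) ^ k * (t * (q * κ)⁻¹) ^ k /
            (qFact q k * ∏ i ∈ range k, qNum q (t * q ^ ((i : ℤ) + 1)))) •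
          (F ^ k) ((E ^ k) v))
      = ∑ k ∈ range (N + 2),
          ((-1 : ℂ) ^ k * (t * q⁻¹ * (q * (κ * (q ^ 2)⁻¹))⁻¹) ^ k /
              (qFact q k * ∏ i ∈ range k, qNum q (t * q⁻¹ * q ^ ((i : ℤ) + 1)))) •
            (F ^ k) ((E ^ k)
              ((κ * qNum q t / qNum q (t * κ⁻¹)) • F v)) := by
  change F (projector q t κ E F N v)
    = projector q (t * q⁻¹) (κ * (q ^ 2)⁻¹) E F (N + 1) ((κ * qNum q t / qNum q (t * κ⁻¹)) • F v)
  simp only [projector, map_sum, map_smul, smul_smul]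
  rw [sum_smul_pow_F_pow_E_F_apply hq0 hKi hKE hEF hκ hKv hnil
    (fun k => projCoeff q (t * q⁻¹) (κ * (q ^ 2)⁻¹) k * (κ * qNum q t / qNum q (t * κ⁻¹)))]
  refine sum_congr rfl fun k hk => ?_
  rw [pow_succ' F k, Module.End.mul_apply, projCoeff_eq_shift_add hq0 ht hκ
    (qNum_pow_ne_zero hq0 hq k.succ_pos) (fun i hi => hden i (by grind)) hden']
  congr 1
  ring

/-- the intertwining relation `f·π(s) = π(s-1)·(q^{h+2}[s]_q/[s-2-h]_q)·f`
for the shifted extremal projector, as operators on a highest weight `U_q(sl2)`-module,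
evaluated on a weight vector `v` with `K v = κ • v` (the `h`-dependent scalars are
evaluated on the weights; `t = q^s`, and `F v` has `K`-eigenvalue `κ q^{-2}`). -/
theorem f_intertwining_relation {V : Type*} [AddCommGroup V] [Module ℂ V]
    (q t κ : ℂ) (hq0 : q ≠ 0) (hq : ∀ n : ℕ, 0 < n → q ^ n ≠ 1) (ht : t ≠ 0) (hκ : κ ≠ 0)
    (E F K Ki : Module.End ℂ V)
    (hK : K * Ki = 1) (hKi : Ki * K = 1)
    (hKE : K * E = (q ^ 2) • (E * K)) (hKF : K * F = (q ^ 2)⁻¹ • (F * K))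
    (hEF : E * F - F * E = (q - q⁻¹)⁻¹ • (K - Ki))
    (v : V) (hKv : K v = κ • v) (N : ℕ) (hnil : (E ^ (N + 1)) v = 0)
    (hden : ∀ i : ℕ, i ≤ N + 1 → qNum q (t * q ^ (i : ℤ)) ≠ 0)
    (hden' : qNum q (t * κ⁻¹) ≠ 0) :
    F (∑ k ∈ range (N + 1),
        ((-1 : ℂ) ^ k * (t * (q * κ)⁻¹) ^ k /
            (qFact q k * ∏ i ∈ range k, qNum q (t * q ^ ((i : ℤ) + 1)))) •
          (F ^ k) ((E ^ k) v))
      = ∑ k ∈ range (N + 2),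
          ((-1 : ℂ) ^ k * (t * q⁻¹ * (q * (κ * (q ^ 2)⁻¹))⁻¹) ^ k /
              (qFact q k * ∏ i ∈ range k, qNum q (t * q⁻¹ * q ^ ((i : ℤ) + 1)))) •
            (F ^ k) ((E ^ k)
              ((κ * qNum q t / qNum q (t * κ⁻¹)) • F v)) :=
  f_intertwining_relation_general q t κ hq0 hq ht hκ E F K Ki hKi hKE hEF v hKv N hnil hden hden'
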